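/- Let (P_n) be strongly invariant for the system (A). The pair (A,P) is polynomially dichotomic (i.e., (h,k)-dichotomic for the rates h_m = (m+1)^α, k_m = (m+1)^β for some α, β > 0) if and only if there exist a sequence of norms 𝒩 = {|||·|||_n : n ∈ ℕ} compatible with (P_n) and real constants α, β > 0 such that (m+1)^α|||A_m^n P_n x|||_m ≤ (n+1)^α|||P_n x|||_n and (m+1)^β|||B_m^n Q_m x|||_n ≤ (n+1)^β|||Q_m x|||_m for all m ≥ n and all x ∈ X. -/

import Mathlib

open ContinuousLinearMap Filter

noncomputable section

variable {X : Type*} [NormedAddCommGroup X] [NormedSpace ℝ X]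

/-- The evolution operator `A_m^n` associated to the linear difference system
`x_{n+1} = A_n x_n`: `A_m^n = A_{m-1} ⋯ A_n` for `m > n` and `A_n^n = I`. -/
def evol (A : ℕ → X →L[ℝ] X) : ℕ → ℕ → X →L[ℝ] X
  | 0, _ => 1
  | m + 1, n => if m + 1 ≤ n then 1 else A m ∘L evol A m n

/-- `P` is a projectors sequence. -/
def ProjSeq (P : ℕ → X →L[ℝ] X) : Prop := ∀ n, P n ∘L P n = P n

/-- The projectors sequence `P` is invariant for the system `(A)`. -/
def InvariantFor (A P : ℕ → X →L[ℝ] X) : Prop := ∀ n, A n ∘L P n = P (n + 1) ∘L A n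

/-- The projectors sequence `P` is strongly invariant for the system `(A)`: it is invariant and
the restriction of `A_m^n` to `Ker P_n` is an isomorphism from `Ker P_n` onto `Ker P_m`. -/
def StronglyInvariantFor (A P : ℕ → X →L[ℝ] X) : Prop :=
  InvariantFor A P ∧ ∀ m n : ℕ, n ≤ m →
    Set.BijOn (evol A m n) (LinearMap.ker (P n : X →ₗ[ℝ] X) : Set X) (LinearMap.ker (P m : X →ₗ[ℝ] X) : Set X)

/-- A growth rate: an increasing sequence with values in `[1, ∞)` tending to `∞`. -/
def IsGrowthRate (h : ℕ → ℝ) : Prop :=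
  StrictMono h ∧ (∀ n, 1 ≤ h n) ∧ Tendsto h atTop atTop

/-- The pair `(A, P)` is `(h,k)`-dichotomic. -/
def Dichotomic (A P : ℕ → X →L[ℝ] X) (h k : ℕ → ℝ) : Prop :=
  ∃ d : ℕ → ℝ, (∀ n, 1 ≤ d n) ∧ Monotone d ∧
    ∀ m n : ℕ, n ≤ m → ∀ x : X,
      h m * ‖evol A m n (P n x)‖ ≤ d n * (h n * ‖P n x‖) ∧
      k m * ‖(1 - P n) x‖ ≤ d m * (k n * ‖evol A m n ((1 - P n) x)‖)

/-- The pair `(A, P)` is uniformly `(h,k)`-dichotomic. -/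
def UniformDichotomic (A P : ℕ → X →L[ℝ] X) (h k : ℕ → ℝ) : Prop :=
  ∃ d : ℝ, 1 ≤ d ∧
    ∀ m n : ℕ, n ≤ m → ∀ x : X,
      h m * ‖evol A m n (P n x)‖ ≤ d * (h n * ‖P n x‖) ∧
      k m * ‖(1 - P n) x‖ ≤ d * (k n * ‖evol A m n ((1 - P n) x)‖)

/-- The pair `(A, P)` has `(h,k)`-growth. -/
def HasGrowth (A P : ℕ → X →L[ℝ] X) (h k : ℕ → ℝ) : Prop :=
  ∃ g : ℕ → ℝ, (∀ n, 1 ≤ g n) ∧ Monotone g ∧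
    ∀ m n : ℕ, n ≤ m → ∀ x : X,
      h n * ‖evol A m n (P n x)‖ ≤ g n * (h m * ‖P n x‖) ∧
      k n * ‖(1 - P n) x‖ ≤ g m * (k m * ‖evol A m n ((1 - P n) x)‖)

/-- `N` is a sequence of norms on `X`. -/
def IsNormSeq (N : ℕ → X → ℝ) : Prop :=
  ∀ n, (∀ x y, N n (x + y) ≤ N n x + N n y) ∧
    (∀ (a : ℝ) (x : X), N n (a • x) = |a| * N n x) ∧
    (∀ x, N n x = 0 ↔ x = 0)

/-- The sequence of norms `N` is compatible with the projectors sequence `P`. -/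
def NormsCompatible (N : ℕ → X → ℝ) (P : ℕ → X →L[ℝ] X) : Prop :=
  IsNormSeq N ∧ ∃ c : ℕ → ℝ, (∀ n, 1 ≤ c n) ∧ Monotone c ∧
    ∀ (n : ℕ) (x : X), ‖x‖ ≤ N n x ∧ N n x ≤ c n * (‖P n x‖ + ‖(1 - P n) x‖)

/-- The defining properties of the skew-evolution operator `B` associated to the pair `(A, P)`:
`A_m^n B_m^n Q_m = Q_m`, `B_m^n A_m^n Q_n = Q_n` and `B_m^n Q_m = Q_n B_m^n Q_m` for `m ≥ n`,
where `Q_n = I - P_n`. -/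
def SkewEvol (A P : ℕ → X →L[ℝ] X) (B : ℕ → ℕ → X →L[ℝ] X) : Prop :=
  ∀ m n : ℕ, n ≤ m →
    evol A m n ∘L (B m n ∘L (1 - P m)) = 1 - P m ∧
    B m n ∘L (evol A m n ∘L (1 - P n)) = 1 - P n ∧
    B m n ∘L (1 - P m) = (1 - P n) ∘L (B m n ∘L (1 - P m))

/-! Given a dichotomy with constants `d n`, set
`|||x|||_n = ⨆ j, h (n + j) / h n * ‖A_{n+j}^n P_n x‖ + max_{p ≤ n} k n / k p * ‖B_n^p Q_n x‖`:
the stable part looks forward along `A`, the unstable part backward along `B`. The dichotomy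
estimates give `‖x‖ ≤ |||x|||_n ≤ d n (‖P_n x‖ + ‖Q_n x‖)`, and the cocycle identities of `A`
and `B` make the two parts contract at the rates `h` and `k`. Conversely, compatibility squeezes
`|||·|||_n` between `‖·‖` and `c n ‖·‖` on `Im P_n` and on `Ker P_n`, which turns the Lyapunov
inequalities back into the dichotomy with `d = c`. Polynomial rates are one instance of positive
rates `h`, `k`. -/

lemma evol_self (A : ℕ → X →L[ℝ] X) (n : ℕ) : evol A n n = 1 := by
  cases n with
  | zero => rfl
  | succ n => rw [evol, if_pos le_rfl]

lemma evol_succ (A : ℕ → X →L[ℝ] X) {m n : ℕ} (hnm : n ≤ m) :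
    evol A (m + 1) n = A m ∘L evol A m n := by
  rw [evol, if_neg (by omega)]

lemma evol_evol (A : ℕ → X →L[ℝ] X) {p n m : ℕ} (hpn : p ≤ n) (hnm : n ≤ m) (x : X) :
    evol A m n (evol A n p x) = evol A m p x := by
  induction m, hnm using Nat.le_induction with
  | base => rw [evol_self, one_apply_eq_self]
  | succ m hm ih => rw [evol_succ A hm, evol_succ A (hpn.trans hm), comp_apply, comp_apply, ih]

namespace ProjSeq

variable {P : ℕ → X →L[ℝ] X}

lemma proj_proj (hP : ProjSeq P) (n : ℕ) (x : X) : P n (P n x) = P n x :=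
  DFunLike.congr_fun (hP n) x

lemma compl_proj (hP : ProjSeq P) (n : ℕ) (x : X) : (1 - P n) (P n x) = 0 := by
  simp [hP.proj_proj]

lemma proj_compl (hP : ProjSeq P) (n : ℕ) (x : X) : P n ((1 - P n) x) = 0 := by
  simp [hP.proj_proj]

lemma compl_compl (hP : ProjSeq P) (n : ℕ) (x : X) : (1 - P n) ((1 - P n) x) = (1 - P n) x := by
  simp [hP.proj_proj]

end ProjSeq

lemma norm_le_norm_proj_add_norm_compl (P : X →L[ℝ] X) (x : X) : ‖x‖ ≤ ‖P x‖ + ‖(1 - P) x‖ := by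
  simpa using norm_add_le (P x) ((1 - P) x)

namespace InvariantFor

variable {A P : ℕ → X →L[ℝ] X}

lemma evol_proj (hinv : InvariantFor A P) {m n : ℕ} (hnm : n ≤ m) (x : X) :
    evol A m n (P n x) = P m (evol A m n x) := by
  induction m, hnm using Nat.le_induction with
  | base => rw [evol_self, one_apply_eq_self, one_apply_eq_self]
  | succ m hm ih =>
    rw [evol_succ A hm, comp_apply, comp_apply, ih]
    exact DFunLike.congr_fun (hinv m) _

lemma evol_compl (hinv : InvariantFor A P) {m n : ℕ} (hnm : n ≤ m) (x : X) :
    evol A m n ((1 - P n) x) = (1 - P m) (evol A m n x) := by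
  simp [hinv.evol_proj hnm]

end InvariantFor

namespace SkewEvol

variable {A P : ℕ → X →L[ℝ] X} {B : ℕ → ℕ → X →L[ℝ] X}

lemma evol_apply (hB : SkewEvol A P B) {m n : ℕ} (hnm : n ≤ m) (x : X) :
    evol A m n (B m n ((1 - P m) x)) = (1 - P m) x :=
  DFunLike.congr_fun (hB m n hnm).1 x

lemma apply_evol (hB : SkewEvol A P B) {m n : ℕ} (hnm : n ≤ m) (x : X) :
    B m n (evol A m n ((1 - P n) x)) = (1 - P n) x :=
  DFunLike.congr_fun (hB m n hnm).2.1 x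

lemma compl_apply (hB : SkewEvol A P B) {m n : ℕ} (hnm : n ≤ m) (x : X) :
    (1 - P n) (B m n ((1 - P m) x)) = B m n ((1 - P m) x) :=
  (DFunLike.congr_fun (hB m n hnm).2.2 x).symm

lemma proj_apply (hP : ProjSeq P) (hB : SkewEvol A P B) {m n : ℕ} (hnm : n ≤ m) (x : X) :
    P n (B m n ((1 - P m) x)) = 0 := by
  rw [← hB.compl_apply hnm, hP.proj_compl]

lemma apply_self (hB : SkewEvol A P B) (n : ℕ) (x : X) : B n n ((1 - P n) x) = (1 - P n) x := by
  simpa [evol_self] using hB.evol_apply le_rfl x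

lemma apply_apply (hB : SkewEvol A P B) {p n m : ℕ} (hpn : p ≤ n) (hnm : n ≤ m) (x : X) :
    B n p ((1 - P n) (B m n ((1 - P m) x))) = B m p ((1 - P m) x) := by
  -- both sides lie in `Ker P_p` and are mapped to `Q_m x` by `A_m^p`, which `B_m^p` inverts there
  set z := B n p ((1 - P n) (B m n ((1 - P m) x)))
  have hz : (1 - P p) z = z := hB.compl_apply hpn _
  have hevol : evol A m p ((1 - P p) z) = (1 - P m) x := by
    rw [hz, ← evol_evol A hpn hnm, hB.evol_apply hpn, hB.compl_apply hnm, hB.evol_apply hnm]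
  calc z = (1 - P p) z := hz.symm
    _ = B m p (evol A m p ((1 - P p) z)) := (hB.apply_evol (hpn.trans hnm) z).symm
    _ = B m p ((1 - P m) x) := by rw [hevol]

end SkewEvol

lemma isNormSeq_of_norm_le (N : ℕ → Seminorm ℝ X) (hN : ∀ n x, ‖x‖ ≤ N n x) :
    IsNormSeq fun n => ⇑(N n) := by
  refine fun n => ⟨map_add_le_add (N n), fun a x => ?_, fun x => ⟨fun hx => ?_, ?_⟩⟩
  · show N n (a • x) = |a| * N n x
    rw [map_smul_eq_mul, Real.norm_eq_abs]
  · exact norm_le_zero_iff.mp (hx ▸ hN n x)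
  · rintro rfl
    exact map_zero (N n)

-- Only meaningful for `w ≥ 0` and pointwise bounded families: otherwise `toNNReal` and the
-- lattice supremum of seminorms return junk values.
def supSeminorm {ι : Type*} {Y : Type*} [NormedAddCommGroup Y] [NormedSpace ℝ Y] (w : ι → ℝ)
    (L : ι → X →L[ℝ] Y) : Seminorm ℝ X :=
  ⨆ i, (w i).toNNReal • (normSeminorm ℝ Y).comp (L i : X →ₗ[ℝ] Y)

section supSeminorm

variable {ι Y : Type*} [NormedAddCommGroup Y] [NormedSpace ℝ Y] {w : ι → ℝ} {L : ι → X →L[ℝ] Y}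

lemma supSeminorm_apply (hw : ∀ i, 0 ≤ w i)
    (hb : ∀ x, BddAbove (Set.range fun i => w i * ‖L i x‖)) (x : X) :
    supSeminorm w L x = ⨆ i, w i * ‖L i x‖ := by
  have hterm : ∀ i x, ((w i).toNNReal • (normSeminorm ℝ Y).comp (L i : X →ₗ[ℝ] Y)) x =
      w i * ‖L i x‖ := fun i x => by
    simp [NNReal.smul_def, Real.coe_toNNReal _ (hw i)]
  rw [supSeminorm, Seminorm.iSup_apply]
  · simp only [hterm]
  · simpa only [Seminorm.bddAbove_range_iff, hterm] using hb

lemma le_supSeminorm (hw : ∀ i, 0 ≤ w i)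
    (hb : ∀ x, BddAbove (Set.range fun i => w i * ‖L i x‖)) (i : ι) (x : X) :
    w i * ‖L i x‖ ≤ supSeminorm w L x := by
  rw [supSeminorm_apply hw hb]
  exact le_ciSup (hb x) i

lemma supSeminorm_le [Nonempty ι] (hw : ∀ i, 0 ≤ w i)
    (hb : ∀ x, BddAbove (Set.range fun i => w i * ‖L i x‖)) {x : X} {C : ℝ}
    (hC : ∀ i, w i * ‖L i x‖ ≤ C) : supSeminorm w L x ≤ C := by
  rw [supSeminorm_apply hw hb]
  exact ciSup_le hC

end supSeminorm

def IsDichotomyBound (A P : ℕ → X →L[ℝ] X) (h k d : ℕ → ℝ) : Prop :=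
  ∀ m n : ℕ, n ≤ m → ∀ x : X,
    h m * ‖evol A m n (P n x)‖ ≤ d n * (h n * ‖P n x‖) ∧
    k m * ‖(1 - P n) x‖ ≤ d m * (k n * ‖evol A m n ((1 - P n) x)‖)

def IsLyapunovNormSeq (A P : ℕ → X →L[ℝ] X) (B : ℕ → ℕ → X →L[ℝ] X) (h k : ℕ → ℝ)
    (N : ℕ → X → ℝ) : Prop :=
  ∀ m n : ℕ, n ≤ m → ∀ x : X,
    h m * N m (evol A m n (P n x)) ≤ h n * N n (P n x) ∧
    k m * N n (B m n ((1 - P m) x)) ≤ k n * N m ((1 - P m) x)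

lemma div_nonneg_of_pos {h : ℕ → ℝ} (hh : ∀ n, 0 < h n) (m n : ℕ) : 0 ≤ h m / h n :=
  div_nonneg (hh m).le (hh n).le

section Lyapunov

variable {A P : ℕ → X →L[ℝ] X} {B : ℕ → ℕ → X →L[ℝ] X} {h k d : ℕ → ℝ}

-- Indexing by `n + j` keeps away from the junk values `evol A m n = 1` for `m < n`.
def stableSeminorm (A P : ℕ → X →L[ℝ] X) (h : ℕ → ℝ) (n : ℕ) : Seminorm ℝ X :=
  supSeminorm (fun j : ℕ => h (n + j) / h n) (fun j => evol A (n + j) n ∘L P n)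

def unstableSeminorm (P : ℕ → X →L[ℝ] X) (B : ℕ → ℕ → X →L[ℝ] X) (k : ℕ → ℝ) (n : ℕ) :
    Seminorm ℝ X :=
  supSeminorm (fun p : Fin (n + 1) => k n / k p) (fun p => B n p ∘L (1 - P n))

def lyapunovSeminorm (A P : ℕ → X →L[ℝ] X) (B : ℕ → ℕ → X →L[ℝ] X) (h k : ℕ → ℝ) (n : ℕ) :
    Seminorm ℝ X :=
  stableSeminorm A P h n + unstableSeminorm P B k n

lemma stableSeminorm_term_le (hh : ∀ n, 0 < h n) (hd : IsDichotomyBound A P h k d)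
    (n j : ℕ) (x : X) : h (n + j) / h n * ‖(evol A (n + j) n ∘L P n) x‖ ≤ d n * ‖P n x‖ := by
  rw [div_mul_eq_mul_div, div_le_iff₀ (hh n), comp_apply]
  linarith [(hd (n + j) n (Nat.le_add_right n j) x).1]

lemma stableSeminorm_bddAbove (hh : ∀ n, 0 < h n) (hd : IsDichotomyBound A P h k d)
    (n : ℕ) (x : X) :
    BddAbove (Set.range fun j => h (n + j) / h n * ‖(evol A (n + j) n ∘L P n) x‖) :=
  ⟨d n * ‖P n x‖, by rintro _ ⟨j, rfl⟩; exact stableSeminorm_term_le hh hd n j x⟩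

lemma le_stableSeminorm (hh : ∀ n, 0 < h n) (hd : IsDichotomyBound A P h k d)
    (n j : ℕ) (x : X) :
    h (n + j) / h n * ‖evol A (n + j) n (P n x)‖ ≤ stableSeminorm A P h n x :=
  le_supSeminorm (fun _ => div_nonneg_of_pos hh _ n) (stableSeminorm_bddAbove hh hd n) j x

lemma stableSeminorm_le_of (hh : ∀ n, 0 < h n) (hd : IsDichotomyBound A P h k d)
    {n : ℕ} {x : X} {C : ℝ} (hC : ∀ j, h (n + j) / h n * ‖evol A (n + j) n (P n x)‖ ≤ C) :
    stableSeminorm A P h n x ≤ C :=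
  supSeminorm_le (fun _ => div_nonneg_of_pos hh _ n) (stableSeminorm_bddAbove hh hd n) hC

lemma norm_proj_le_stableSeminorm (hh : ∀ n, 0 < h n) (hd : IsDichotomyBound A P h k d)
    (n : ℕ) (x : X) : ‖P n x‖ ≤ stableSeminorm A P h n x := by
  simpa [div_self (hh n).ne', evol_self] using le_stableSeminorm hh hd n 0 x

lemma stableSeminorm_le (hh : ∀ n, 0 < h n) (hd : IsDichotomyBound A P h k d)
    (n : ℕ) (x : X) : stableSeminorm A P h n x ≤ d n * ‖P n x‖ :=
  stableSeminorm_le_of hh hd (stableSeminorm_term_le hh hd n · x)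

lemma stableSeminorm_eq_zero (hh : ∀ n, 0 < h n) (hd : IsDichotomyBound A P h k d)
    {n : ℕ} {x : X} (hx : P n x = 0) : stableSeminorm A P h n x = 0 :=
  le_antisymm (stableSeminorm_le_of hh hd fun _ => by rw [hx, map_zero, norm_zero, mul_zero])
    (apply_nonneg _ _)

lemma stableSeminorm_evol_le (hP : ProjSeq P) (hinv : InvariantFor A P) (hh : ∀ n, 0 < h n)
    (hd : IsDichotomyBound A P h k d) {m n : ℕ} (hnm : n ≤ m) (x : X) :
    h m * stableSeminorm A P h m (evol A m n (P n x)) ≤ h n * stableSeminorm A P h n (P n x) := by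
  obtain ⟨i, rfl⟩ := Nat.exists_eq_add_of_le hnm
  set y := evol A (n + i) n (P n x)
  have key : stableSeminorm A P h (n + i) y ≤ h n / h (n + i) * stableSeminorm A P h n (P n x) := by
    refine stableSeminorm_le_of hh hd fun j => ?_
    calc h (n + i + j) / h (n + i) * ‖evol A (n + i + j) (n + i) (P (n + i) y)‖
        = h n / h (n + i) * (h (n + (i + j)) / h n * ‖evol A (n + (i + j)) n (P n (P n x))‖) := by
          rw [← hinv.evol_proj hnm, hP.proj_proj, evol_evol A hnm (Nat.le_add_right _ j),
            add_assoc]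
          field_simp [(hh n).ne', (hh (n + i)).ne']
      _ ≤ h n / h (n + i) * stableSeminorm A P h n (P n x) :=
          mul_le_mul_of_nonneg_left (le_stableSeminorm hh hd n (i + j) _)
            (div_nonneg_of_pos hh n _)
  calc h (n + i) * stableSeminorm A P h (n + i) y
      ≤ h (n + i) * (h n / h (n + i) * stableSeminorm A P h n (P n x)) :=
        mul_le_mul_of_nonneg_left key (hh _).le
    _ = h n * stableSeminorm A P h n (P n x) := by field_simp [(hh (n + i)).ne']

lemma le_unstableSeminorm (hk : ∀ n, 0 < k n) (n : ℕ) (p : Fin (n + 1)) (x : X) :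
    k n / k p * ‖B n p ((1 - P n) x)‖ ≤ unstableSeminorm P B k n x :=
  le_supSeminorm (L := fun p : Fin (n + 1) => B n p ∘L (1 - P n))
    (fun _ => div_nonneg_of_pos hk n _) (fun _ => (Set.finite_range _).bddAbove) p x

lemma unstableSeminorm_le_of (hk : ∀ n, 0 < k n) {n : ℕ} {x : X} {C : ℝ}
    (hC : ∀ p : Fin (n + 1), k n / k p * ‖B n p ((1 - P n) x)‖ ≤ C) :
    unstableSeminorm P B k n x ≤ C :=
  supSeminorm_le (L := fun p : Fin (n + 1) => B n p ∘L (1 - P n))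
    (fun _ => div_nonneg_of_pos hk n _) (fun _ => (Set.finite_range _).bddAbove) hC

lemma norm_compl_le_unstableSeminorm (hk : ∀ n, 0 < k n) (hB : SkewEvol A P B)
    (n : ℕ) (x : X) : ‖(1 - P n) x‖ ≤ unstableSeminorm P B k n x := by
  simpa only [Fin.val_last, div_self (hk n).ne', one_mul, hB.apply_self] using
    le_unstableSeminorm (P := P) (B := B) hk n (Fin.last n) x

lemma unstableSeminorm_le (hk : ∀ n, 0 < k n) (hB : SkewEvol A P B)
    (hd : IsDichotomyBound A P h k d) (n : ℕ) (x : X) :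
    unstableSeminorm P B k n x ≤ d n * ‖(1 - P n) x‖ := by
  refine unstableSeminorm_le_of hk fun p => ?_
  have hdp := (hd n p p.is_le (B n p ((1 - P n) x))).2
  rw [hB.compl_apply p.is_le, hB.evol_apply p.is_le] at hdp
  rw [div_mul_eq_mul_div, div_le_iff₀ (hk p)]
  linarith

lemma unstableSeminorm_eq_zero (hk : ∀ n, 0 < k n) {n : ℕ} {x : X} (hx : (1 - P n) x = 0) :
    unstableSeminorm P B k n x = 0 :=
  le_antisymm (unstableSeminorm_le_of hk fun _ => by rw [hx, map_zero, norm_zero, mul_zero])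
    (apply_nonneg _ _)

lemma unstableSeminorm_skew_le (hP : ProjSeq P) (hk : ∀ n, 0 < k n) (hB : SkewEvol A P B)
    {m n : ℕ} (hnm : n ≤ m) (x : X) :
    k m * unstableSeminorm P B k n (B m n ((1 - P m) x)) ≤
      k n * unstableSeminorm P B k m ((1 - P m) x) := by
  have key : unstableSeminorm P B k n (B m n ((1 - P m) x)) ≤
      k n / k m * unstableSeminorm P B k m ((1 - P m) x) := by
    refine unstableSeminorm_le_of hk fun p => ?_
    calc k n / k p * ‖B n p ((1 - P n) (B m n ((1 - P m) x)))‖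
        = k n / k m * (k m / k p * ‖B m p ((1 - P m) ((1 - P m) x))‖) := by
          rw [hB.apply_apply p.is_le hnm, hP.compl_compl]
          field_simp [(hk m).ne', (hk p).ne']
      _ ≤ k n / k m * unstableSeminorm P B k m ((1 - P m) x) :=
          mul_le_mul_of_nonneg_left (le_unstableSeminorm hk m (Fin.castLE (by omega) p) _)
            (div_nonneg_of_pos hk n m)
  calc k m * unstableSeminorm P B k n (B m n ((1 - P m) x))
      ≤ k m * (k n / k m * unstableSeminorm P B k m ((1 - P m) x)) :=
        mul_le_mul_of_nonneg_left key (hk m).le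
    _ = k n * unstableSeminorm P B k m ((1 - P m) x) := by field_simp [(hk m).ne']

lemma norm_le_lyapunovSeminorm (hh : ∀ n, 0 < h n) (hk : ∀ n, 0 < k n) (hB : SkewEvol A P B)
    (hd : IsDichotomyBound A P h k d) (n : ℕ) (x : X) : ‖x‖ ≤ lyapunovSeminorm A P B h k n x :=
  (norm_le_norm_proj_add_norm_compl (P n) x).trans <|
    add_le_add (norm_proj_le_stableSeminorm hh hd n x) (norm_compl_le_unstableSeminorm hk hB n x)

lemma lyapunovSeminorm_le (hh : ∀ n, 0 < h n) (hk : ∀ n, 0 < k n) (hB : SkewEvol A P B)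
    (hd : IsDichotomyBound A P h k d) (n : ℕ) (x : X) :
    lyapunovSeminorm A P B h k n x ≤ d n * (‖P n x‖ + ‖(1 - P n) x‖) := by
  rw [mul_add]
  exact add_le_add (stableSeminorm_le hh hd n x) (unstableSeminorm_le hk hB hd n x)

lemma isLyapunovNormSeq_lyapunovSeminorm (hP : ProjSeq P) (hinv : InvariantFor A P)
    (hB : SkewEvol A P B) (hh : ∀ n, 0 < h n) (hk : ∀ n, 0 < k n)
    (hd : IsDichotomyBound A P h k d) :
    IsLyapunovNormSeq A P B h k fun n => lyapunovSeminorm A P B h k n := by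
  intro m n hnm x
  have hQ : (1 - P m) (evol A m n (P n x)) = 0 := by
    rw [← hinv.evol_compl hnm, hP.compl_proj, map_zero]
  have hS := stableSeminorm_eq_zero hh hd (hB.proj_apply hP hnm x)
  have hU := unstableSeminorm_eq_zero (B := B) hk hQ
  simp only [lyapunovSeminorm, add_apply, hS, hU, add_zero, zero_add]
  constructor
  · calc h m * stableSeminorm A P h m (evol A m n (P n x))
        ≤ h n * stableSeminorm A P h n (P n x) := stableSeminorm_evol_le hP hinv hh hd hnm x
      _ ≤ h n * (stableSeminorm A P h n (P n x) + unstableSeminorm P B k n (P n x)) :=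
        mul_le_mul_of_nonneg_left (le_add_of_nonneg_right (apply_nonneg _ _)) (hh n).le
  · calc k m * unstableSeminorm P B k n (B m n ((1 - P m) x))
        ≤ k n * unstableSeminorm P B k m ((1 - P m) x) := unstableSeminorm_skew_le hP hk hB hnm x
      _ ≤ k n * (stableSeminorm A P h m ((1 - P m) x) + unstableSeminorm P B k m ((1 - P m) x)) :=
        mul_le_mul_of_nonneg_left (le_add_of_nonneg_left (apply_nonneg _ _)) (hk n).le

lemma Dichotomic.exists_lyapunovNormSeq (hP : ProjSeq P) (hinv : InvariantFor A P)
    (hB : SkewEvol A P B) (hh : ∀ n, 0 < h n) (hk : ∀ n, 0 < k n) (hD : Dichotomic A P h k) :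
    ∃ N : ℕ → X → ℝ, NormsCompatible N P ∧ IsLyapunovNormSeq A P B h k N := by
  obtain ⟨d, hd1, hdm, hd⟩ := hD
  exact ⟨fun n => lyapunovSeminorm A P B h k n,
    ⟨isNormSeq_of_norm_le _ (norm_le_lyapunovSeminorm hh hk hB hd), d, hd1, hdm,
      fun n x => ⟨norm_le_lyapunovSeminorm hh hk hB hd n x, lyapunovSeminorm_le hh hk hB hd n x⟩⟩,
    isLyapunovNormSeq_lyapunovSeminorm hP hinv hB hh hk hd⟩

lemma IsLyapunovNormSeq.dichotomic {N : ℕ → X → ℝ} (hP : ProjSeq P) (hinv : InvariantFor A P)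
    (hB : SkewEvol A P B) (hh : ∀ n, 0 ≤ h n) (hk : ∀ n, 0 ≤ k n) (hN : NormsCompatible N P)
    (hL : IsLyapunovNormSeq A P B h k N) : Dichotomic A P h k := by
  obtain ⟨-, c, hc1, hcm, hc⟩ := hN
  have hNP : ∀ n x, N n (P n x) ≤ c n * ‖P n x‖ := fun n x => by
    have hup := (hc n (P n x)).2
    rwa [hP.proj_proj, hP.compl_proj, norm_zero, add_zero] at hup
  have hNQ : ∀ n x, N n ((1 - P n) x) ≤ c n * ‖(1 - P n) x‖ := fun n x => by
    have hup := (hc n ((1 - P n) x)).2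
    rwa [hP.proj_compl, hP.compl_compl, norm_zero, zero_add] at hup
  refine ⟨c, hc1, hcm, fun m n hnm x => ⟨?_, ?_⟩⟩
  · calc h m * ‖evol A m n (P n x)‖ ≤ h m * N m (evol A m n (P n x)) :=
          mul_le_mul_of_nonneg_left (hc m _).1 (hh m)
      _ ≤ h n * N n (P n x) := (hL m n hnm x).1
      _ ≤ h n * (c n * ‖P n x‖) := mul_le_mul_of_nonneg_left (hNP n x) (hh n)
      _ = c n * (h n * ‖P n x‖) := by ring
  · have hBQ : B m n ((1 - P m) (evol A m n x)) = (1 - P n) x := by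
      rw [← hinv.evol_compl hnm, hB.apply_evol hnm]
    calc k m * ‖(1 - P n) x‖ ≤ k m * N n (B m n ((1 - P m) (evol A m n x))) := by
          rw [hBQ]; exact mul_le_mul_of_nonneg_left (hc n _).1 (hk m)
      _ ≤ k n * N m ((1 - P m) (evol A m n x)) := (hL m n hnm (evol A m n x)).2
      _ ≤ k n * (c m * ‖(1 - P m) (evol A m n x)‖) := mul_le_mul_of_nonneg_left (hNQ m _) (hk n)
      _ = c m * (k n * ‖evol A m n ((1 - P n) x)‖) := by rw [hinv.evol_compl hnm]; ring

theorem dichotomic_iff_exists_lyapunovNormSeq (hP : ProjSeq P) (hinv : InvariantFor A P)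
    (hB : SkewEvol A P B) (hh : ∀ n, 0 < h n) (hk : ∀ n, 0 < k n) :
    Dichotomic A P h k ↔ ∃ N : ℕ → X → ℝ, NormsCompatible N P ∧ IsLyapunovNormSeq A P B h k N :=
  ⟨Dichotomic.exists_lyapunovNormSeq hP hinv hB hh hk, fun ⟨_, hN, hL⟩ =>
    hL.dichotomic hP hinv hB (fun n => (hh n).le) (fun n => (hk n).le) hN⟩

end Lyapunov

theorem stmt_8_general (A P : ℕ → X →L[ℝ] X) (B : ℕ → ℕ → X →L[ℝ] X)
    (hP : ProjSeq P) (hSI : StronglyInvariantFor A P) (hB : SkewEvol A P B) :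
    (∃ α β : ℝ, 0 < α ∧ 0 < β ∧
      Dichotomic A P (fun m => ((m : ℝ) + 1) ^ α) (fun m => ((m : ℝ) + 1) ^ β)) ↔
      ∃ N : ℕ → X → ℝ, NormsCompatible N P ∧ ∃ α β : ℝ, 0 < α ∧ 0 < β ∧
        ∀ m n : ℕ, n ≤ m → ∀ x : X,
          ((m : ℝ) + 1) ^ α * N m (evol A m n (P n x)) ≤
            ((n : ℝ) + 1) ^ α * N n (P n x) ∧
          ((m : ℝ) + 1) ^ β * N n (B m n ((1 - P m) x)) ≤
            ((n : ℝ) + 1) ^ β * N m ((1 - P m) x) := by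
  have hpos : ∀ γ : ℝ, ∀ n : ℕ, 0 < ((n : ℝ) + 1) ^ γ := fun γ n => by positivity
  constructor
  · rintro ⟨α, β, hα, hβ, hD⟩
    obtain ⟨N, hN, hL⟩ :=
      (dichotomic_iff_exists_lyapunovNormSeq hP hSI.1 hB (hpos α) (hpos β)).1 hD
    exact ⟨N, hN, α, β, hα, hβ, hL⟩
  · rintro ⟨N, hN, α, β, hα, hβ, hL⟩
    exact ⟨α, β, hα, hβ,
      (dichotomic_iff_exists_lyapunovNormSeq hP hSI.1 hB (hpos α) (hpos β)).2 ⟨N, hN, hL⟩⟩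

theorem stmt_8 [CompleteSpace X] (A P : ℕ → X →L[ℝ] X) (B : ℕ → ℕ → X →L[ℝ] X)
    (hP : ProjSeq P) (hSI : StronglyInvariantFor A P) (hB : SkewEvol A P B) :
    (∃ α β : ℝ, 0 < α ∧ 0 < β ∧
      Dichotomic A P (fun m => ((m : ℝ) + 1) ^ α) (fun m => ((m : ℝ) + 1) ^ β)) ↔
      ∃ N : ℕ → X → ℝ, NormsCompatible N P ∧ ∃ α β : ℝ, 0 < α ∧ 0 < β ∧
        ∀ m n : ℕ, n ≤ m → ∀ x : X,
          ((m : ℝ) + 1) ^ α * N m (evol A m n (P n x)) ≤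
            ((n : ℝ) + 1) ^ α * N n (P n x) ∧
          ((m : ℝ) + 1) ^ β * N n (B m n ((1 - P m) x)) ≤
            ((n : ℝ) + 1) ^ β * N m ((1 - P m) x) :=
  stmt_8_general A P B hP hSI hB

end
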